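/- If chord diagrams D and D' are related by a finite sequence of moves, each of which is a first move or a strong third move (each applied in either direction), then X(D) ≡ X(D') (mod 3). (The conclusion of Theorem 2: the cross chord number modulo 3 is a strong (1,3) homotopy invariant.) -/
import Mathlib


open scoped Classical

/-- Two chords of a chord diagram on the points `0 < 1 < ⋯ < N-1` (in this cyclic
order) cross if their endpoints interleave. -/
def Crosses {N : ℕ} (c d : Sym2 (Fin N)) : Prop :=
  ∃ a b x y : Fin N, a < x ∧ x < b ∧ b < y ∧
    ((c = s(a, b) ∧ d = s(x, y)) ∨ (c = s(x, y) ∧ d = s(a, b)))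

/-- A chord diagram of order `n`: a partition of the `2n` points `0, 1, …, 2n-1`
(in this cyclic order on a circle) into `n` unordered pairs, the chords. -/
structure ChordDiagram (n : ℕ) where
  chords : Finset (Sym2 (Fin (2 * n)))
  not_diag : ∀ c ∈ chords, ¬ c.IsDiag
  cover : ∀ x : Fin (2 * n), ∃! c, c ∈ chords ∧ x ∈ c

/-- The trivializing number: the minimum number of chords whose deletion yields a
trivial chord diagram (one with no two crossing chords). -/
noncomputable def tr {n : ℕ} (D : ChordDiagram n) : ℕ :=
  sInf {k | ∃ S ⊆ D.chords, S.card = k ∧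
    ∀ c ∈ D.chords \ S, ∀ d ∈ D.chords \ S, ¬ Crosses c d}

/-- The cross chord number: the number of unordered pairs of chords that cross. -/
noncomputable def Xnum {n : ℕ} (D : ChordDiagram n) : ℕ :=
  ((D.chords ×ˢ D.chords).filter fun p => Crosses p.1 p.2).card / 2

/-- Two points are cyclically adjacent on the circle `0, 1, …, N-1`. -/
def Adjacent {N : ℕ} (p q : Fin N) : Prop :=
  (p.val + 1) % N = q.val ∨ (q.val + 1) % N = p.val

/-- The ternary cyclic-order relation on the points `0, 1, …, N-1`. -/
def CyclicBtw {N : ℕ} (a b c : Fin N) : Prop :=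
  (a < b ∧ b < c) ∨ (b < c ∧ c < a) ∨ (c < a ∧ a < b)

/-- A first move (first flat Reidemeister move): `D'` is obtained from `D` by
adding an isolated chord. -/
def FirstMove {n : ℕ} (D : ChordDiagram n) (D' : ChordDiagram (n + 1)) : Prop :=
  ∃ ι : Fin (2 * n) → Fin (2 * (n + 1)),
    Function.Injective ι ∧
    (∀ a b c, CyclicBtw a b c → CyclicBtw (ι a) (ι b) (ι c)) ∧
    (∀ ch ∈ D.chords, ch.map ι ∈ D'.chords) ∧
    ∃ p q : Fin (2 * (n + 1)), Adjacent p q ∧ s(p, q) ∈ D'.chords ∧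
      ∀ x, x ∉ Set.range ι ↔ (x = p ∨ x = q)

/-- A triple move with distinguished pairs `A = {a₁, a₂}`, `B = {b₁, b₂}`,
`C = {c₁, c₂}` of cyclically adjacent points and distinguished chords
`s(a₁, b₁)`, `s(a₂, c₁)`, `s(b₂, c₂)`: `D'` is obtained from `D` by transposing
the two points of each of `A`, `B`, `C`. -/
def TripleMoveAt {n : ℕ} (D D' : ChordDiagram n)
    (a₁ a₂ b₁ b₂ c₁ c₂ : Fin (2 * n)) : Prop :=
  Adjacent a₁ a₂ ∧ Adjacent b₁ b₂ ∧ Adjacent c₁ c₂ ∧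
  ([a₁, a₂, b₁, b₂, c₁, c₂].Pairwise (· ≠ ·)) ∧
  s(a₁, b₁) ∈ D.chords ∧ s(a₂, c₁) ∈ D.chords ∧ s(b₂, c₂) ∈ D.chords ∧
  D'.chords = D.chords.image
    (Sym2.map (Equiv.swap a₁ a₂ * Equiv.swap b₁ b₂ * Equiv.swap c₁ c₂))

/-- Three chords pairwise cross. -/
def PairwiseCross {N : ℕ} (x y z : Sym2 (Fin N)) : Prop :=
  Crosses x y ∧ Crosses x z ∧ Crosses y z

/-- Exactly one of the three pairs among three chords crosses. -/
def ExactlyOneCross {N : ℕ} (x y z : Sym2 (Fin N)) : Prop :=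
  (Crosses x y ∧ ¬ Crosses x z ∧ ¬ Crosses y z) ∨
  (¬ Crosses x y ∧ Crosses x z ∧ ¬ Crosses y z) ∨
  (¬ Crosses x y ∧ ¬ Crosses x z ∧ Crosses y z)

/-- A strong third move: a triple move whose three distinguished chords pairwise
cross in `D`, or whose three replacement chords pairwise cross in `D'`. -/
def StrongThirdMove {n : ℕ} (D D' : ChordDiagram n) : Prop :=
  ∃ a₁ a₂ b₁ b₂ c₁ c₂, TripleMoveAt D D' a₁ a₂ b₁ b₂ c₁ c₂ ∧
    (PairwiseCross s(a₁, b₁) s(a₂, c₁) s(b₂, c₂) ∨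
     PairwiseCross s(a₂, b₂) s(a₁, c₂) s(b₁, c₁))

/-- A weak third move: a triple move such that exactly one pair of the three
distinguished chords crosses in `D`, or exactly one pair of the three
replacement chords crosses in `D'`. -/
def WeakThirdMove {n : ℕ} (D D' : ChordDiagram n) : Prop :=
  ∃ a₁ a₂ b₁ b₂ c₁ c₂, TripleMoveAt D D' a₁ a₂ b₁ b₂ c₁ c₂ ∧
    (ExactlyOneCross s(a₁, b₁) s(a₂, c₁) s(b₂, c₂) ∨
     ExactlyOneCross s(a₂, b₂) s(a₁, c₂) s(b₁, c₁))


/-- A first move, packaged on the type of chord diagrams of all orders. -/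
def FirstMoveS (D E : Σ n, ChordDiagram n) : Prop :=
  ∃ (n : ℕ) (A : ChordDiagram n) (B : ChordDiagram (n + 1)),
    D = ⟨n, A⟩ ∧ E = ⟨n + 1, B⟩ ∧ FirstMove A B

/-- A strong third move, packaged on the type of chord diagrams of all orders. -/
def StrongThirdS (D E : Σ n, ChordDiagram n) : Prop :=
  ∃ (n : ℕ) (A B : ChordDiagram n), D = ⟨n, A⟩ ∧ E = ⟨n, B⟩ ∧ StrongThirdMove A B



section StrongHelpers

lemma crosses_comm {N : ℕ} {c d : Sym2 (Fin N)} : Crosses c d ↔ Crosses d c := by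
  constructor <;> rintro ⟨a,b,x,y,h1,h2,h3,hc⟩ <;> exact ⟨a,b,x,y,h1,h2,h3, by tauto⟩

lemma not_crosses_self {N : ℕ} (c : Sym2 (Fin N)) : ¬ Crosses c c := by
  rintro ⟨a,b,x,y,h1,h2,h3,(⟨hc,hd⟩|⟨hc,hd⟩)⟩ <;>
  · rw [hc, Sym2.eq_iff] at hd
    simp only [Fin.lt_def, Fin.ext_iff] at h1 h2 h3 hd
    omega

lemma crosses_iff_sep' {N : ℕ} {α β γ δ : Fin N} (hab : α < β) (hgd : γ < δ)
    (h3 : α ≠ γ) (h4 : α ≠ δ) (h5 : β ≠ γ) (h6 : β ≠ δ) :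
    Crosses s(α, β) s(γ, δ) ↔ ((α < γ ∧ γ < β) ↔ ¬(α < δ ∧ δ < β)) := by
  constructor
  · rintro ⟨a,b,x,y,h1,h2,h3',(⟨hc,hd⟩|⟨hc,hd⟩)⟩ <;>
      rw [Sym2.eq_iff] at hc hd <;>
    · simp only [Fin.lt_def, Fin.ext_iff, ne_eq] at *
      omega
  · intro h
    by_cases hγ : α < γ ∧ γ < β
    · have hδ : β < δ := by
        have h' := h.mp hγ
        simp only [Fin.lt_def, Fin.ext_iff, ne_eq, not_and, not_lt] at *
        omega
      exact ⟨α,β,γ,δ,hγ.1,hγ.2,hδ,Or.inl ⟨rfl,rfl⟩⟩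
    · have hδ : α < δ ∧ δ < β := by
        by_contra hδ; exact hγ (h.mpr hδ)
      have hγα : γ < α := by
        simp only [Fin.lt_def, Fin.ext_iff, ne_eq, not_and, not_lt] at *
        omega
      exact ⟨γ,δ,α,β,hγα,hδ.1,hδ.2,Or.inr ⟨rfl,rfl⟩⟩

lemma crosses_iff_sep {N : ℕ} {α β γ δ : Fin N} (h1 : α ≠ β) (h2 : γ ≠ δ)
    (h3 : α ≠ γ) (h4 : α ≠ δ) (h5 : β ≠ γ) (h6 : β ≠ δ) :
    Crosses s(α, β) s(γ, δ) ↔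
      ((min α.val β.val < γ.val ∧ γ.val < max α.val β.val) ↔
        ¬(min α.val β.val < δ.val ∧ δ.val < max α.val β.val)) := by
  rcases lt_or_gt_of_ne h1 with hab | hab <;> rcases lt_or_gt_of_ne h2 with hgd | hgd
  · rw [crosses_iff_sep' hab hgd h3 h4 h5 h6]
    simp only [Fin.lt_def]; omega
  · rw [show s(γ,δ) = s(δ,γ) from Sym2.eq_swap,
      crosses_iff_sep' hab hgd h4 h3 h6 h5]
    simp only [Fin.lt_def]; omega
  · rw [show s(α,β) = s(β,α) from Sym2.eq_swap,
      crosses_iff_sep' hab hgd h5 h6 h3 h4]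
    simp only [Fin.lt_def]; omega
  · rw [show s(α,β) = s(β,α) from Sym2.eq_swap, show s(γ,δ) = s(δ,γ) from Sym2.eq_swap,
      crosses_iff_sep' hab hgd h6 h5 h4 h3]
    simp only [Fin.lt_def]; omega

lemma adjacent_val {N : ℕ} {p q : Fin N} (h : Adjacent p q) :
    p.val + 1 = q.val ∨ (p.val + 1 = N ∧ q.val = 0) ∨
    q.val + 1 = p.val ∨ (q.val + 1 = N ∧ p.val = 0) := by
  have hp := p.isLt; have hq := q.isLt
  rcases h with h | h
  · rcases Nat.lt_or_ge (p.val+1) N with h' | h'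
    · rw [Nat.mod_eq_of_lt h'] at h; omega
    · have hN : p.val + 1 = N := by omega
      rw [hN, Nat.mod_self] at h; omega
  · rcases Nat.lt_or_ge (q.val+1) N with h' | h'
    · rw [Nat.mod_eq_of_lt h'] at h; omega
    · have hN : q.val + 1 = N := by omega
      rw [hN, Nat.mod_self] at h; omega

lemma crosses_move_adj {N : ℕ} {p p' y u v : Fin N} (hadj : Adjacent p p')
    (h1 : p ≠ p') (h2 : p ≠ y) (h3 : p' ≠ y) (h4 : u ≠ v)
    (h5 : p ≠ u) (h6 : p ≠ v) (h7 : p' ≠ u) (h8 : p' ≠ v) (h9 : y ≠ u) (h10 : y ≠ v) :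
    Crosses s(p, y) s(u, v) ↔ Crosses s(p', y) s(u, v) := by
  rw [crosses_iff_sep h2 h4 h5 h6 h9 h10, crosses_iff_sep h3 h4 h7 h8 h9 h10]
  have hv := adjacent_val hadj
  have := p.isLt; have := p'.isLt; have := y.isLt; have := u.isLt; have := v.isLt
  simp only [ne_eq, Fin.ext_iff] at h1 h2 h3 h4 h5 h6 h7 h8 h9 h10
  omega

lemma isolated_not_crosses {N : ℕ} {p q : Fin N} (h : Adjacent p q) (e : Sym2 (Fin N)) :
    ¬ Crosses s(p, q) e := by
  have hv := adjacent_val h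
  rintro ⟨a,b,x,y,h1,h2,h3,(⟨hc,-⟩|⟨hc,-⟩)⟩ <;> rw [Sym2.eq_iff] at hc <;>
  · have := a.isLt; have := b.isLt; have := x.isLt; have := y.isLt
    simp only [Fin.lt_def, Fin.ext_iff] at h1 h2 h3 hc
    omega

lemma crosses_iff_cyclic {N : ℕ} {α β γ δ : Fin N} (h1 : α ≠ β) (h2 : γ ≠ δ)
    (h3 : α ≠ γ) (h4 : α ≠ δ) (h5 : β ≠ γ) (h6 : β ≠ δ) :
    Crosses s(α, β) s(γ, δ) ↔ (CyclicBtw α γ β ↔ ¬ CyclicBtw α δ β) := by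
  rw [crosses_iff_sep h1 h2 h3 h4 h5 h6]
  unfold CyclicBtw
  simp only [Fin.lt_def, ne_eq, Fin.ext_iff] at *
  omega

lemma cyclicBtw_total {N : ℕ} {a b c : Fin N} (h1 : a ≠ b) (h2 : b ≠ c) (h3 : a ≠ c) :
    CyclicBtw a b c ∨ CyclicBtw a c b := by
  unfold CyclicBtw
  simp only [ne_eq, Fin.ext_iff] at h1 h2 h3
  simp only [Fin.lt_def]
  omega

lemma cyclicBtw_asymm {N : ℕ} {a b c : Fin N} (h : CyclicBtw a b c) : ¬ CyclicBtw a c b := by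
  unfold CyclicBtw at *
  simp only [Fin.lt_def] at *
  omega

lemma cyclicBtw_map_iff {N M : ℕ} {ι : Fin N → Fin M}
    (hcyc : ∀ a b c, CyclicBtw a b c → CyclicBtw (ι a) (ι b) (ι c))
    {a b c : Fin N} (h1 : a ≠ b) (h2 : b ≠ c) (h3 : a ≠ c) :
    CyclicBtw (ι a) (ι b) (ι c) ↔ CyclicBtw a b c := by
  refine ⟨fun h => ?_, hcyc a b c⟩
  rcases cyclicBtw_total h1 h2 h3 with h' | h'
  · exact h'
  · exact absurd h (cyclicBtw_asymm (hcyc _ _ _ h'))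

lemma crosses_map_iff {N M : ℕ} {ι : Fin N → Fin M} (hinj : Function.Injective ι)
    (hcyc : ∀ a b c, CyclicBtw a b c → CyclicBtw (ι a) (ι b) (ι c))
    {α β γ δ : Fin N} (h1 : α ≠ β) (h2 : γ ≠ δ)
    (h3 : α ≠ γ) (h4 : α ≠ δ) (h5 : β ≠ γ) (h6 : β ≠ δ) :
    Crosses s(ι α, ι β) s(ι γ, ι δ) ↔ Crosses s(α, β) s(γ, δ) := by
  rw [crosses_iff_cyclic (hinj.ne h1) (hinj.ne h2) (hinj.ne h3) (hinj.ne h4)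
      (hinj.ne h5) (hinj.ne h6),
    cyclicBtw_map_iff hcyc h3 h5.symm h1, cyclicBtw_map_iff hcyc h4 h6.symm h1,
    crosses_iff_cyclic h1 h2 h3 h4 h5 h6]

lemma even_card_of_invol {α : Type*} [DecidableEq α] (f : α → α)
    (hff : ∀ a, f (f a) = a) :
    ∀ s : Finset α, (∀ a ∈ s, f a ∈ s) → (∀ a ∈ s, f a ≠ a) → Even s.card := by
  intro s
  induction s using Finset.strongInduction with
  | _ s ih =>
    intro hmap hne
    rcases Finset.eq_empty_or_nonempty s with rfl | ⟨a, ha⟩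
    · simp
    have hfa : f a ∈ s := hmap a ha
    have hane : f a ≠ a := hne a ha
    have hmem : f a ∈ s.erase a := Finset.mem_erase.mpr ⟨hane, hfa⟩
    set t := (s.erase a).erase (f a) with ht
    have hsub : t ⊂ s :=
      lt_of_le_of_lt (Finset.erase_subset _ _) (Finset.erase_ssubset ha)
    have hcard : s.card = t.card + 2 := by
      rw [ht, Finset.card_erase_of_mem hmem, Finset.card_erase_of_mem ha]
      have h1 := Finset.card_pos.mpr ⟨a, ha⟩
      have h2 := Finset.card_pos.mpr ⟨f a, hmem⟩
      rw [Finset.card_erase_of_mem ha] at h2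
      omega
    have htmem : ∀ b, b ∈ t ↔ b ≠ f a ∧ b ≠ a ∧ b ∈ s := by
      intro b; simp [ht, Finset.mem_erase, and_assoc]
    have heven : Even t.card := by
      apply ih t hsub
      · intro b hb
        rw [htmem] at hb ⊢
        obtain ⟨hb1, hb2, hb3⟩ := hb
        refine ⟨fun h => hb2 ?_, fun h => hb1 ?_, hmap b hb3⟩
        · rw [← hff b, h, hff a]
        · rw [← hff b, h]
      · intro b hb; exact hne b ((htmem b).mp hb).2.2
    rw [hcard]
    rcases heven with ⟨r, hr⟩; exact ⟨r+1, by omega⟩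

set_option maxHeartbeats 1000000 in
lemma strong_flip {N : ℕ} {p1 p2 p3 p4 p5 p6 : Fin N}
    (hA : Adjacent p1 p2) (hB : Adjacent p3 p4) (hC : Adjacent p5 p6)
    (h12 : p1 ≠ p2) (h13 : p1 ≠ p3) (h14 : p1 ≠ p4) (h15 : p1 ≠ p5) (h16 : p1 ≠ p6)
    (h23 : p2 ≠ p3) (h24 : p2 ≠ p4) (h25 : p2 ≠ p5) (h26 : p2 ≠ p6)
    (h34 : p3 ≠ p4) (h35 : p3 ≠ p5) (h36 : p3 ≠ p6)
    (h45 : p4 ≠ p5) (h46 : p4 ≠ p6) (h56 : p5 ≠ p6)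
    (hcr : PairwiseCross s(p1, p3) s(p2, p5) s(p4, p6)) :
    ¬ Crosses s(p2, p4) s(p1, p6) ∧ ¬ Crosses s(p2, p4) s(p3, p5) ∧
      ¬ Crosses s(p1, p6) s(p3, p5) := by
  obtain ⟨hx1, hx2, hx3⟩ := hcr
  rw [crosses_iff_sep h13 h25 h12 h15 h23.symm h35] at hx1
  rw [crosses_iff_sep h13 h46 h14 h16 h34 h36] at hx2
  rw [crosses_iff_sep h25 h46 h24 h26 h45.symm h56] at hx3
  rw [crosses_iff_sep h24 h16 h12.symm h26 h14.symm h46,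
    crosses_iff_sep h24 h35 h23 h25 h34.symm h45,
    crosses_iff_sep h16 h35 h13 h15 h36.symm h56.symm]
  have hvA := adjacent_val hA
  have hvB := adjacent_val hB
  have hvC := adjacent_val hC
  have := p1.isLt; have := p2.isLt; have := p3.isLt
  have := p4.isLt; have := p5.isLt; have := p6.isLt
  simp only [ne_eq, Fin.ext_iff] at h12 h13 h14 h15 h16 h23 h24 h25 h26 h34 h35 h36 h45 h46 h56
  rcases hvA with h|h|h|h <;> rcases hvB with h'|h'|h'|h' <;> rcases hvC with h''|h''|h''|h'' <;> omega

lemma chord_eq_of_mem {n : ℕ} (D : ChordDiagram n) {c d : Sym2 (Fin (2*n))} {x : Fin (2*n)}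
    (hc : c ∈ D.chords) (hd : d ∈ D.chords) (hxc : x ∈ c) (hxd : x ∈ d) : c = d := by
  obtain ⟨e, -, he⟩ := D.cover x
  rw [he c ⟨hc, hxc⟩, he d ⟨hd, hxd⟩]

lemma crosses_map_chords {n M : ℕ} (A : ChordDiagram n)
    {ι : Fin (2*n) → Fin M} (hinj : Function.Injective ι)
    (hcyc : ∀ a b c, CyclicBtw a b c → CyclicBtw (ι a) (ι b) (ι c)) :
    ∀ c, c ∈ A.chords → ∀ d, d ∈ A.chords →
      (Crosses (Sym2.map ι c) (Sym2.map ι d) ↔ Crosses c d) := by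
  intro c
  induction c using Sym2.ind with
  | _ α β =>
  intro hc d
  induction d using Sym2.ind with
  | _ γ δ =>
  intro hd
  by_cases hne : s(α, β) = s(γ, δ)
  · rw [hne]
    exact iff_of_false (not_crosses_self _) (not_crosses_self _)
  · have h1 : α ≠ β := fun h => A.not_diag _ hc (Sym2.mk_isDiag_iff.mpr h)
    have h2 : γ ≠ δ := fun h => A.not_diag _ hd (Sym2.mk_isDiag_iff.mpr h)
    have h3 : α ≠ γ := fun h => hne (chord_eq_of_mem A hc hd (Sym2.mem_mk_left _ _)
      (by rw [h]; exact Sym2.mem_mk_left _ _))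
    have h4 : α ≠ δ := fun h => hne (chord_eq_of_mem A hc hd (Sym2.mem_mk_left _ _)
      (by rw [h]; exact Sym2.mem_mk_right _ _))
    have h5 : β ≠ γ := fun h => hne (chord_eq_of_mem A hc hd (Sym2.mem_mk_right _ _)
      (by rw [h]; exact Sym2.mem_mk_left _ _))
    have h6 : β ≠ δ := fun h => hne (chord_eq_of_mem A hc hd (Sym2.mem_mk_right _ _)
      (by rw [h]; exact Sym2.mem_mk_right _ _))
    simp only [Sym2.map_pair_eq]
    exact crosses_map_iff hinj hcyc h1 h2 h3 h4 h5 h6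

lemma xnum_firstMove {n : ℕ} {A : ChordDiagram n} {B : ChordDiagram (n+1)}
    (h : FirstMove A B) : Xnum A = Xnum B := by
  obtain ⟨ι, hinj, hcyc, hch, p, q, hadj, hpq, hrange⟩ := h
  have hrange' : ∀ x : Fin (2*(n+1)), x ≠ p → x ≠ q → x ∈ Set.range ι := by
    intro x hx1 hx2
    by_contra hx
    rcases (hrange x).mp hx with h | h
    exacts [hx1 h, hx2 h]
  have hclass : ∀ c', c' ∈ B.chords → c' = s(p, q) ∨ ∃ c ∈ A.chords, c' = Sym2.map ι c := by
    intro c'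
    induction c' using Sym2.ind with
    | _ u v =>
    intro hc'
    by_cases hu : u = p ∨ u = q
    · left
      refine chord_eq_of_mem B hc' hpq (Sym2.mem_mk_left _ _) ?_
      rcases hu with rfl | rfl
      · exact Sym2.mem_mk_left _ _
      · exact Sym2.mem_mk_right _ _
    · right
      push_neg at hu
      obtain ⟨w, rfl⟩ := hrange' u hu.1 hu.2
      obtain ⟨c, ⟨hcA, hwc⟩, -⟩ := A.cover w
      refine ⟨c, hcA, ?_⟩
      exact chord_eq_of_mem B hc' (hch c hcA) (Sym2.mem_mk_left _ _)
        (Sym2.mem_map.mpr ⟨w, hwc, rfl⟩)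
  have hbij : ((A.chords ×ˢ A.chords).filter fun P => Crosses P.1 P.2).card
      = ((B.chords ×ˢ B.chords).filter fun P => Crosses P.1 P.2).card := by
    apply Finset.card_bij (fun P _ => (Sym2.map ι P.1, Sym2.map ι P.2))
    · intro P hP
      simp only [Finset.mem_filter, Finset.mem_product] at hP ⊢
      obtain ⟨⟨hP1, hP2⟩, hPc⟩ := hP
      exact ⟨⟨hch _ hP1, hch _ hP2⟩, (crosses_map_chords A hinj hcyc _ hP1 _ hP2).mpr hPc⟩
    · intro P hP Q hQ hPQ
      simp only [Prod.mk.injEq] at hPQ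
      exact Prod.ext (Sym2.map.injective hinj hPQ.1) (Sym2.map.injective hinj hPQ.2)
    · rintro ⟨Q1, Q2⟩ hQ
      simp only [Finset.mem_filter, Finset.mem_product] at hQ
      obtain ⟨⟨hQ1, hQ2⟩, hQc⟩ := hQ
      have h1 : Q1 ≠ s(p, q) := fun h =>
        isolated_not_crosses hadj Q2 (by rw [h] at hQc; exact hQc)
      have h2 : Q2 ≠ s(p, q) := fun h =>
        isolated_not_crosses hadj Q1 (by rw [h] at hQc; exact crosses_comm.mp hQc)
      obtain ⟨c, hcA, hce⟩ := (hclass Q1 hQ1).resolve_left h1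
      obtain ⟨d, hdA, hde⟩ := (hclass Q2 hQ2).resolve_left h2
      refine ⟨(c, d), Finset.mem_filter.mpr ⟨Finset.mem_product.mpr ⟨hcA, hdA⟩, ?_⟩, ?_⟩
      · exact (crosses_map_chords A hinj hcyc _ hcA _ hdA).mp (by rw [← hce, ← hde]; exact hQc)
      · rw [hce, hde]
  unfold Xnum
  rw [hbij]

lemma adjacent_symm {N : ℕ} {p q : Fin N} (h : Adjacent p q) : Adjacent q p := h.symm

set_option maxHeartbeats 1000000 in
lemma xnum_strongThird {n : ℕ} {A B : ChordDiagram n} (h : StrongThirdMove A B) :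
    Xnum A ≡ Xnum B [MOD 3] := by
  obtain ⟨a₁, a₂, b₁, b₂, c₁, c₂, ⟨hA, hB, hC, hdist, ht₁, ht₂, ht₃, hBC⟩, hstrong⟩ := h
  simp only [List.pairwise_cons, List.mem_cons, List.mem_singleton, List.not_mem_nil,
    forall_eq_or_imp, forall_eq, List.Pairwise.nil, and_true, ne_eq,
    IsEmpty.forall_iff, implies_true] at hdist
  obtain ⟨⟨h12, h13, h14, h15, h16⟩, ⟨h23, h24, h25, h26⟩, ⟨h34, h35, h36⟩, ⟨h45, h46⟩, h56⟩ :=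
    hdist
  set σ : Equiv.Perm (Fin (2*n)) :=
    Equiv.swap a₁ a₂ * Equiv.swap b₁ b₂ * Equiv.swap c₁ c₂ with hσdef
  have hσ : ∀ x, σ x = Equiv.swap a₁ a₂ (Equiv.swap b₁ b₂ (Equiv.swap c₁ c₂ x)) :=
    fun x => rfl
  have s1 : σ a₁ = a₂ := by
    rw [hσ, Equiv.swap_apply_of_ne_of_ne h15 h16,
      Equiv.swap_apply_of_ne_of_ne h13 h14, Equiv.swap_apply_left]
  have s2 : σ a₂ = a₁ := by
    rw [hσ, Equiv.swap_apply_of_ne_of_ne h25 h26,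
      Equiv.swap_apply_of_ne_of_ne h23 h24, Equiv.swap_apply_right]
  have s3 : σ b₁ = b₂ := by
    rw [hσ, Equiv.swap_apply_of_ne_of_ne h35 h36, Equiv.swap_apply_left,
      Equiv.swap_apply_of_ne_of_ne (Ne.symm h14) (Ne.symm h24)]
  have s4 : σ b₂ = b₁ := by
    rw [hσ, Equiv.swap_apply_of_ne_of_ne h45 h46, Equiv.swap_apply_right,
      Equiv.swap_apply_of_ne_of_ne (Ne.symm h13) (Ne.symm h23)]
  have s5 : σ c₁ = c₂ := by
    rw [hσ, Equiv.swap_apply_left,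
      Equiv.swap_apply_of_ne_of_ne (Ne.symm h36) (Ne.symm h46),
      Equiv.swap_apply_of_ne_of_ne (Ne.symm h16) (Ne.symm h26)]
  have s6 : σ c₂ = c₁ := by
    rw [hσ, Equiv.swap_apply_right,
      Equiv.swap_apply_of_ne_of_ne (Ne.symm h35) (Ne.symm h45),
      Equiv.swap_apply_of_ne_of_ne (Ne.symm h15) (Ne.symm h25)]
  have hσfix : ∀ x, x ≠ a₁ → x ≠ a₂ → x ≠ b₁ → x ≠ b₂ → x ≠ c₁ → x ≠ c₂ → σ x = x := by
    intro x k1 k2 k3 k4 k5 k6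
    rw [hσ, Equiv.swap_apply_of_ne_of_ne k5 k6, Equiv.swap_apply_of_ne_of_ne k3 k4,
      Equiv.swap_apply_of_ne_of_ne k1 k2]
  have hm1 : Sym2.map σ s(a₁, b₁) = s(a₂, b₂) := by rw [Sym2.map_pair_eq, s1, s3]
  have hm2 : Sym2.map σ s(a₂, c₁) = s(a₁, c₂) := by rw [Sym2.map_pair_eq, s2, s5]
  have hm3 : Sym2.map σ s(b₂, c₂) = s(b₁, c₁) := by rw [Sym2.map_pair_eq, s4, s6]
  set T : Finset (Sym2 (Fin (2*n))) := {s(a₁, b₁), s(a₂, c₁), s(b₂, c₂)} with hTdef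
  set T' : Finset (Sym2 (Fin (2*n))) := {s(a₂, b₂), s(a₁, c₂), s(b₁, c₁)} with hT'def
  have hTmem : ∀ c, c ∈ T ↔ c = s(a₁, b₁) ∨ c = s(a₂, c₁) ∨ c = s(b₂, c₂) := by
    intro c; simp [hTdef]
  have hT'mem : ∀ c, c ∈ T' ↔ c = s(a₂, b₂) ∨ c = s(a₁, c₂) ∨ c = s(b₁, c₁) := by
    intro c; simp [hT'def]
  have hT'img : T.image (Sym2.map σ) = T' := by
    simp [hTdef, hT'def, Finset.image_insert, Finset.image_singleton, hm1, hm2, hm3]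
  have hinjσ : Function.Injective (Sym2.map σ) := Sym2.map.injective σ.injective
  have hTsub : T ⊆ A.chords := by
    intro c hc; rw [hTmem] at hc
    rcases hc with rfl | rfl | rfl <;> assumption
  have hT'sub : T' ⊆ B.chords := by
    rw [hBC, ← hT'img]; exact Finset.image_subset_image hTsub
  have havoid : ∀ u v, s(u, v) ∈ A.chords → s(u, v) ∉ T →
      u ≠ a₁ ∧ u ≠ a₂ ∧ u ≠ b₁ ∧ u ≠ b₂ ∧ u ≠ c₁ ∧ u ≠ c₂ := by
    intro u v hc hnT
    refine ⟨?_, ?_, ?_, ?_, ?_, ?_⟩ <;> rintro rfl <;> apply hnT <;> rw [hTmem]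
    · exact Or.inl (chord_eq_of_mem A hc ht₁ (Sym2.mem_mk_left _ _) (Sym2.mem_mk_left _ _))
    · exact Or.inr (Or.inl
        (chord_eq_of_mem A hc ht₂ (Sym2.mem_mk_left _ _) (Sym2.mem_mk_left _ _)))
    · exact Or.inl (chord_eq_of_mem A hc ht₁ (Sym2.mem_mk_left _ _) (Sym2.mem_mk_right _ _))
    · exact Or.inr (Or.inr
        (chord_eq_of_mem A hc ht₃ (Sym2.mem_mk_left _ _) (Sym2.mem_mk_left _ _)))
    · exact Or.inr (Or.inl
        (chord_eq_of_mem A hc ht₂ (Sym2.mem_mk_left _ _) (Sym2.mem_mk_right _ _)))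
    · exact Or.inr (Or.inr
        (chord_eq_of_mem A hc ht₃ (Sym2.mem_mk_left _ _) (Sym2.mem_mk_right _ _)))
  have hfix : ∀ c, c ∈ A.chords → c ∉ T → Sym2.map σ c = c := by
    intro c
    induction c using Sym2.ind with
    | _ u v =>
    intro hc hnT
    have hc' : s(v, u) ∈ A.chords := by rw [Sym2.eq_swap]; exact hc
    have hnT' : s(v, u) ∉ T := by rw [Sym2.eq_swap]; exact hnT
    obtain ⟨u1, u2, u3, u4, u5, u6⟩ := havoid u v hc hnT
    obtain ⟨v1, v2, v3, v4, v5, v6⟩ := havoid v u hc' hnT'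
    rw [Sym2.map_pair_eq, hσfix u u1 u2 u3 u4 u5 u6, hσfix v v1 v2 v3 v4 v5 v6]
  have hmix : ∀ c ∈ T, ∀ d, d ∈ A.chords → d ∉ T →
      (Crosses (Sym2.map σ c) d ↔ Crosses c d) := by
    intro c hcT d
    induction d using Sym2.ind with
    | _ u v =>
    intro hd hdnT
    have hd' : s(v, u) ∈ A.chords := by rw [Sym2.eq_swap]; exact hd
    have hdnT' : s(v, u) ∉ T := by rw [Sym2.eq_swap]; exact hdnT
    have huv : u ≠ v := fun h => A.not_diag _ hd (Sym2.mk_isDiag_iff.mpr h)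
    obtain ⟨u1, u2, u3, u4, u5, u6⟩ := havoid u v hd hdnT
    obtain ⟨v1, v2, v3, v4, v5, v6⟩ := havoid v u hd' hdnT'
    rw [hTmem] at hcT
    rcases hcT with rfl | rfl | rfl
    · rw [hm1]
      have step1 : Crosses s(a₂, b₂) s(u, v) ↔ Crosses s(a₁, b₂) s(u, v) :=
        crosses_move_adj (adjacent_symm hA) (Ne.symm h12) h24 h14 huv
          (Ne.symm u2) (Ne.symm v2) (Ne.symm u1) (Ne.symm v1) (Ne.symm u4) (Ne.symm v4)
      have step2 : Crosses s(a₁, b₂) s(u, v) ↔ Crosses s(a₁, b₁) s(u, v) := by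
        rw [show s(a₁, b₂) = s(b₂, a₁) from Sym2.eq_swap,
          show s(a₁, b₁) = s(b₁, a₁) from Sym2.eq_swap]
        exact crosses_move_adj (adjacent_symm hB) (Ne.symm h34) (Ne.symm h14) (Ne.symm h13)
          huv (Ne.symm u4) (Ne.symm v4) (Ne.symm u3) (Ne.symm v3) (Ne.symm u1) (Ne.symm v1)
      exact step1.trans step2
    · rw [hm2]
      have step1 : Crosses s(a₁, c₂) s(u, v) ↔ Crosses s(a₂, c₂) s(u, v) :=
        crosses_move_adj hA h12 h16 h26 huv
          (Ne.symm u1) (Ne.symm v1) (Ne.symm u2) (Ne.symm v2) (Ne.symm u6) (Ne.symm v6)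
      have step2 : Crosses s(a₂, c₂) s(u, v) ↔ Crosses s(a₂, c₁) s(u, v) := by
        rw [show s(a₂, c₂) = s(c₂, a₂) from Sym2.eq_swap,
          show s(a₂, c₁) = s(c₁, a₂) from Sym2.eq_swap]
        exact crosses_move_adj (adjacent_symm hC) (Ne.symm h56) (Ne.symm h26) (Ne.symm h25)
          huv (Ne.symm u6) (Ne.symm v6) (Ne.symm u5) (Ne.symm v5) (Ne.symm u2) (Ne.symm v2)
      exact step1.trans step2
    · rw [hm3]
      have step1 : Crosses s(b₁, c₁) s(u, v) ↔ Crosses s(b₂, c₁) s(u, v) :=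
        crosses_move_adj hB h34 h35 h45 huv
          (Ne.symm u3) (Ne.symm v3) (Ne.symm u4) (Ne.symm v4) (Ne.symm u5) (Ne.symm v5)
      have step2 : Crosses s(b₂, c₁) s(u, v) ↔ Crosses s(b₂, c₂) s(u, v) := by
        rw [show s(b₂, c₁) = s(c₁, b₂) from Sym2.eq_swap,
          show s(b₂, c₂) = s(c₂, b₂) from Sym2.eq_swap]
        exact crosses_move_adj hC h56 (Ne.symm h45) (Ne.symm h46)
          huv (Ne.symm u5) (Ne.symm v5) (Ne.symm u6) (Ne.symm v6) (Ne.symm u4) (Ne.symm v4)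
      exact step1.trans step2
  have htrans : ∀ c, c ∈ A.chords → ∀ d, d ∈ A.chords → ¬(c ∈ T ∧ d ∈ T) →
      (Crosses (Sym2.map σ c) (Sym2.map σ d) ↔ Crosses c d) := by
    intro c hc d hd hnot
    by_cases hcT : c ∈ T
    · by_cases hdT : d ∈ T
      · exact absurd ⟨hcT, hdT⟩ hnot
      · rw [hfix d hd hdT]; exact hmix c hcT d hd hdT
    · by_cases hdT : d ∈ T
      · rw [hfix c hc hcT, crosses_comm, crosses_comm (c := c) (d := d)]
        exact hmix d hdT c hc hcT
      · rw [hfix c hc hcT, hfix d hd hdT]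
  set SA := (A.chords ×ˢ A.chords).filter (fun P => Crosses P.1 P.2) with hSAdef
  set SB := (B.chords ×ˢ B.chords).filter (fun P => Crosses P.1 P.2) with hSBdef
  have hmemT : ∀ c, c ∈ T ↔ Sym2.map σ c ∈ T' := by
    intro c; rw [← hT'img]
    constructor
    · exact fun h => Finset.mem_image_of_mem _ h
    · intro h
      obtain ⟨c', hc', he⟩ := Finset.mem_image.mp h
      rwa [← hinjσ he]
  have hmemB : ∀ c, c ∈ A.chords ↔ Sym2.map σ c ∈ B.chords := by
    intro c; rw [hBC]
    constructor
    · exact fun h => Finset.mem_image_of_mem _ h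
    · intro h
      obtain ⟨c', hc', he⟩ := Finset.mem_image.mp h
      rwa [← hinjσ he]
  have hk : (SA.filter fun P => ¬(P.1 ∈ T ∧ P.2 ∈ T)).card
      = (SB.filter fun P => ¬(P.1 ∈ T' ∧ P.2 ∈ T')).card := by
    apply Finset.card_bij (fun P _ => (Sym2.map σ P.1, Sym2.map σ P.2))
    · rintro ⟨P1, P2⟩ hP
      simp only [hSAdef, hSBdef, Finset.mem_filter, Finset.mem_product] at hP ⊢
      obtain ⟨⟨⟨hA1, hA2⟩, hcr⟩, hnot⟩ := hP
      refine ⟨⟨⟨(hmemB _).mp hA1, (hmemB _).mp hA2⟩, ?_⟩, ?_⟩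
      · exact (htrans _ hA1 _ hA2 hnot).mpr hcr
      · intro hcon
        exact hnot ⟨(hmemT _).mpr hcon.1, (hmemT _).mpr hcon.2⟩
    · intro P hP Q hQ hPQ
      simp only [Prod.mk.injEq] at hPQ
      exact Prod.ext (hinjσ hPQ.1) (hinjσ hPQ.2)
    · rintro ⟨Q1, Q2⟩ hQ
      simp only [hSAdef, hSBdef, Finset.mem_filter, Finset.mem_product] at hQ
      obtain ⟨⟨⟨hB1, hB2⟩, hcr⟩, hnot⟩ := hQ
      rw [hBC] at hB1 hB2
      obtain ⟨c, hcA, hce⟩ := Finset.mem_image.mp hB1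
      obtain ⟨d, hdA, hde⟩ := Finset.mem_image.mp hB2
      have hnot' : ¬(c ∈ T ∧ d ∈ T) := by
        intro hcon
        exact hnot ⟨hce ▸ (hmemT _).mp hcon.1, hde ▸ (hmemT _).mp hcon.2⟩
      refine ⟨(c, d), ?_, ?_⟩
      · simp only [hSAdef, Finset.mem_filter, Finset.mem_product]
        refine ⟨⟨⟨hcA, hdA⟩, ?_⟩, hnot'⟩
        exact (htrans _ hcA _ hdA hnot').mp (by rw [hce, hde]; exact hcr)
      · rw [hce, hde]
  have hsplitA := Finset.card_filter_add_card_filter_not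
    (s := SA) (p := fun P => P.1 ∈ T ∧ P.2 ∈ T)
  have hsplitB := Finset.card_filter_add_card_filter_not
    (s := SB) (p := fun P => P.1 ∈ T' ∧ P.2 ∈ T')
  have hevenA : Even SA.card := by
    apply even_card_of_invol Prod.swap Prod.swap_swap
    · rintro ⟨x, y⟩ hx
      simp only [hSAdef, Finset.mem_filter, Finset.mem_product] at hx ⊢
      exact ⟨⟨hx.1.2, hx.1.1⟩, crosses_comm.mp hx.2⟩
    · rintro ⟨x, y⟩ hx hswap
      simp only [hSAdef, Finset.mem_filter, Finset.mem_product] at hx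
      simp only [Prod.swap_prod_mk, Prod.mk.injEq] at hswap
      exact not_crosses_self x (hswap.2 ▸ hx.2)
  have hevenB : Even SB.card := by
    apply even_card_of_invol Prod.swap Prod.swap_swap
    · rintro ⟨x, y⟩ hx
      simp only [hSBdef, Finset.mem_filter, Finset.mem_product] at hx ⊢
      exact ⟨⟨hx.1.2, hx.1.1⟩, crosses_comm.mp hx.2⟩
    · rintro ⟨x, y⟩ hx hswap
      simp only [hSBdef, Finset.mem_filter, Finset.mem_product] at hx
      simp only [Prod.swap_prod_mk, Prod.mk.injEq] at hswap
      exact not_crosses_self x (hswap.2 ▸ hx.2)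
  have hne12 : s(a₁, b₁) ≠ s(a₂, c₁) := by
    rw [Ne, Sym2.eq_iff]; rintro (⟨h, -⟩ | ⟨h, -⟩); exacts [h12 h, h15 h]
  have hne13 : s(a₁, b₁) ≠ s(b₂, c₂) := by
    rw [Ne, Sym2.eq_iff]; rintro (⟨h, -⟩ | ⟨h, -⟩); exacts [h14 h, h16 h]
  have hne23 : s(a₂, c₁) ≠ s(b₂, c₂) := by
    rw [Ne, Sym2.eq_iff]; rintro (⟨h, -⟩ | ⟨h, -⟩); exacts [h24 h, h26 h]
  have hne12' : s(a₂, b₂) ≠ s(a₁, c₂) := by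
    rw [Ne, Sym2.eq_iff]; rintro (⟨h, -⟩ | ⟨h, -⟩); exacts [Ne.symm h12 h, h26 h]
  have hne13' : s(a₂, b₂) ≠ s(b₁, c₁) := by
    rw [Ne, Sym2.eq_iff]; rintro (⟨h, -⟩ | ⟨h, -⟩); exacts [h23 h, h25 h]
  have hne23' : s(a₁, c₂) ≠ s(b₁, c₁) := by
    rw [Ne, Sym2.eq_iff]; rintro (⟨h, -⟩ | ⟨h, -⟩); exacts [h13 h, h15 h]
  have hcardT : T.card = 3 := by
    rw [hTdef]
    rw [Finset.card_insert_of_notMem (by simp [hne12, hne13]),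
      Finset.card_insert_of_notMem (by simp [hne23]), Finset.card_singleton]
  have hcardT' : T'.card = 3 := by
    rw [hT'def]
    rw [Finset.card_insert_of_notMem (by simp [hne12', hne13']),
      Finset.card_insert_of_notMem (by simp [hne23']), Finset.card_singleton]
  obtain ⟨r, hr⟩ := hevenA
  obtain ⟨t, ht⟩ := hevenB
  have hXA : Xnum A = SA.card / 2 := rfl
  have hXB : Xnum B = SB.card / 2 := rfl
  rcases hstrong with hs | hs
  · obtain ⟨hx1, hx2, hx3⟩ := hs
    obtain ⟨hf1, hf2, hf3⟩ := strong_flip hA hB hC h12 h13 h14 h15 h16 h23 h24 h25 h26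
      h34 h35 h36 h45 h46 h56 ⟨hx1, hx2, hx3⟩
    have hTA : (SA.filter fun P => P.1 ∈ T ∧ P.2 ∈ T) = T.offDiag := by
      ext ⟨P1, P2⟩
      simp only [hSAdef, Finset.mem_filter, Finset.mem_product, Finset.mem_offDiag]
      constructor
      · rintro ⟨⟨-, hcr⟩, hT1, hT2⟩
        exact ⟨hT1, hT2, fun he => not_crosses_self _ (he ▸ hcr)⟩
      · rintro ⟨hT1, hT2, hne⟩
        refine ⟨⟨⟨hTsub hT1, hTsub hT2⟩, ?_⟩, hT1, hT2⟩
        rw [hTmem] at hT1 hT2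
        rcases hT1 with rfl | rfl | rfl <;> rcases hT2 with rfl | rfl | rfl <;>
          first
            | exact absurd rfl hne
            | assumption
            | exact crosses_comm.mp hx1
            | exact crosses_comm.mp hx2
            | exact crosses_comm.mp hx3
    have hTB : (SB.filter fun P => P.1 ∈ T' ∧ P.2 ∈ T') = ∅ := by
      ext ⟨P1, P2⟩
      simp only [hSBdef, Finset.mem_filter, Finset.mem_product, Finset.notMem_empty,
        iff_false]
      rintro ⟨⟨-, hcr⟩, hT1, hT2⟩
      rw [hT'mem] at hT1 hT2
      rcases hT1 with rfl | rfl | rfl <;> rcases hT2 with rfl | rfl | rfl <;>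
        first
          | exact not_crosses_self _ hcr
          | exact hf1 hcr
          | exact hf2 hcr
          | exact hf3 hcr
          | exact hf1 (crosses_comm.mp hcr)
          | exact hf2 (crosses_comm.mp hcr)
          | exact hf3 (crosses_comm.mp hcr)
    rw [hTA, Finset.offDiag_card, hcardT] at hsplitA
    rw [hTB, Finset.card_empty] at hsplitB
    rw [hXA, hXB]
    show SA.card / 2 % 3 = SB.card / 2 % 3
    omega
  · obtain ⟨hx1, hx2, hx3⟩ := hs
    obtain ⟨hf1, hf2, hf3⟩ := strong_flip (adjacent_symm hA) (adjacent_symm hB)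
      (adjacent_symm hC) (Ne.symm h12) h24 h23 h26 h25 h14 h13 h16 h15 (Ne.symm h34)
      h46 h45 h36 h35 (Ne.symm h56) ⟨hx1, hx2, hx3⟩
    have hTA : (SA.filter fun P => P.1 ∈ T ∧ P.2 ∈ T) = ∅ := by
      ext ⟨P1, P2⟩
      simp only [hSAdef, Finset.mem_filter, Finset.mem_product, Finset.notMem_empty,
        iff_false]
      rintro ⟨⟨-, hcr⟩, hT1, hT2⟩
      rw [hTmem] at hT1 hT2
      rcases hT1 with rfl | rfl | rfl <;> rcases hT2 with rfl | rfl | rfl <;>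
        first
          | exact not_crosses_self _ hcr
          | exact hf1 hcr
          | exact hf2 hcr
          | exact hf3 hcr
          | exact hf1 (crosses_comm.mp hcr)
          | exact hf2 (crosses_comm.mp hcr)
          | exact hf3 (crosses_comm.mp hcr)
    have hTB : (SB.filter fun P => P.1 ∈ T' ∧ P.2 ∈ T') = T'.offDiag := by
      ext ⟨P1, P2⟩
      simp only [hSBdef, Finset.mem_filter, Finset.mem_product, Finset.mem_offDiag]
      constructor
      · rintro ⟨⟨-, hcr⟩, hT1, hT2⟩
        exact ⟨hT1, hT2, fun he => not_crosses_self _ (he ▸ hcr)⟩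
      · rintro ⟨hT1, hT2, hne⟩
        refine ⟨⟨⟨hT'sub hT1, hT'sub hT2⟩, ?_⟩, hT1, hT2⟩
        rw [hT'mem] at hT1 hT2
        rcases hT1 with rfl | rfl | rfl <;> rcases hT2 with rfl | rfl | rfl <;>
          first
            | exact absurd rfl hne
            | assumption
            | exact crosses_comm.mp hx1
            | exact crosses_comm.mp hx2
            | exact crosses_comm.mp hx3
    rw [hTA, Finset.card_empty] at hsplitA
    rw [hTB, Finset.offDiag_card, hcardT'] at hsplitB
    rw [hXA, hXB]
    show SA.card / 2 % 3 = SB.card / 2 % 3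
    omega

end StrongHelpers

/-- Theorem 2: the cross chord number modulo 3 is invariant
under any finite sequence of first moves and strong third moves, each applied in
either direction (i.e. it is a strong (1,3) homotopy invariant). -/
theorem Xnum_modeq_of_strong13 (D E : Σ n, ChordDiagram n)
    (h : Relation.ReflTransGen
      (fun X Y => FirstMoveS X Y ∨ FirstMoveS Y X ∨ StrongThirdS X Y ∨ StrongThirdS Y X)
      D E) :
    Xnum D.2 ≡ Xnum E.2 [MOD 3] := by
  induction h with
  | refl => rfl
  | @tail b c hDb hbc ih =>
    refine ih.trans ?_
    rcases hbc with hm | hm | hm | hm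
    · obtain ⟨n, A, B, rfl, rfl, hm⟩ := hm
      show Xnum A ≡ Xnum B [MOD 3]
      rw [xnum_firstMove hm]
    · obtain ⟨n, A, B, rfl, rfl, hm⟩ := hm
      show Xnum B ≡ Xnum A [MOD 3]
      rw [xnum_firstMove hm]
    · obtain ⟨n, A, B, rfl, rfl, hm⟩ := hm
      exact xnum_strongThird hm
    · obtain ⟨n, A, B, rfl, rfl, hm⟩ := hm
      exact (xnum_strongThird hm).symm
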